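/- A propositional formula E is satisfiable if and only if the default theory ⟨{(: a∧E / a∧E)}, ∅⟩ skeptically entails a, where a is a variable not occurring in E. -/
import Mathlib


/-- Propositional formulas over variables indexed by `Nat`. -/
inductive Fm where
  | var : Nat → Fm
  | tru : Fm
  | fls : Fm
  | neg : Fm → Fm
  | conj : Fm → Fm → Fm
  | disj : Fm → Fm → Fm
deriving DecidableEq

/-- Evaluation of a formula under an assignment. -/
def Fm.eval (σ : Nat → Bool) : Fm → Bool
  | .var n => σ n
  | .tru => true
  | .fls => false
  | .neg F => !(F.eval σ)
  | .conj F G => F.eval σ && G.eval σ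
  | .disj F G => F.eval σ || G.eval σ

/-- `F.subst x v` replaces every occurrence of variable `x` by the constant `v`. -/
def Fm.subst (x : Nat) (v : Bool) : Fm → Fm
  | .var n => if n = x then (if v then .tru else .fls) else .var n
  | .tru => .tru
  | .fls => .fls
  | .neg F => .neg (F.subst x v)
  | .conj F G => .conj (F.subst x v) (G.subst x v)
  | .disj F G => .disj (F.subst x v) (G.subst x v)

/-- `F.occurs x` : variable `x` occurs in `F`. -/
def Fm.occurs (x : Nat) : Fm → Prop
  | .var n => n = x
  | .tru => False
  | .fls => False
  | .neg F => F.occurs x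
  | .conj F G => F.occurs x ∨ G.occurs x
  | .disj F G => F.occurs x ∨ G.occurs x

/-- Propositional entailment from a set of formulas. -/
def Entails (S : Set Fm) (f : Fm) : Prop :=
  ∀ σ : Nat → Bool, (∀ g ∈ S, g.eval σ = true) → f.eval σ = true

/-- Deductive closure. -/
def Th (S : Set Fm) : Set Fm := {f | Entails S f}

/-- A default `α : β / γ` with precondition `α`, justification `β`, consequence `γ`. -/
structure Default where
  pre : Fm
  jus : Fm
  con : Fm

/-- `G` is closed for the Reiter operator relative to candidate extension `E`:
it contains `W`, is deductively closed, and applies every default of `D` whose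
precondition is in `G` and whose justification is consistent with `E`. -/
def DLClosed (D : Set Default) (W : Set Fm) (E : Set Fm) (G : Set Fm) : Prop :=
  W ⊆ G ∧ (∀ f, Entails G f → f ∈ G) ∧
    ∀ d ∈ D, d.pre ∈ G → (Fm.neg d.jus) ∉ E → d.con ∈ G

/-- Reiter extension: `E` is the least set closed for the operator relative to `E` itself. -/
def IsExtension (D : Set Default) (W : Set Fm) (E : Set Fm) : Prop :=
  E = ⋂₀ {G | DLClosed D W E G}

/-- Skeptical entailment: `φ` belongs to every extension. -/
def Skeptical (D : Set Default) (W : Set Fm) (φ : Fm) : Prop :=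
  ∀ E, IsExtension D W E → φ ∈ E

/-- Substitution applied throughout a default. -/
def Default.subst (x : Nat) (v : Bool) (d : Default) : Default :=
  ⟨d.pre.subst x v, d.jus.subst x v, d.con.subst x v⟩

/-- `x` occurs in a default. -/
def Default.occurs (x : Nat) (d : Default) : Prop :=
  d.pre.occurs x ∨ d.jus.occurs x ∨ d.con.occurs x

/-- The merged default theory of the raising construction:
`{(: x∧p / x∧p), (: ¬x∧p / ¬x∧p)} ∪ {(p∧α : β / γ) | (α:β/γ) ∈ D}`. -/
def mergedD (D : Set Default) (x p : Nat) : Set Default :=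
  {⟨.tru, .conj (.var x) (.var p), .conj (.var x) (.var p)⟩,
   ⟨.tru, .conj (.neg (.var x)) (.var p), .conj (.neg (.var x)) (.var p)⟩} ∪
  (fun d => Default.mk (.conj (.var p) d.pre) d.jus d.con) '' D

lemma eval_indep (a : Nat) (b : Bool) (σ : Nat → Bool) :
    ∀ F : Fm, ¬ F.occurs a →
      F.eval (fun n => if n = a then b else σ n) = F.eval σ := by
  intro F
  induction F with
  | var n =>
    intro h
    simp only [Fm.occurs] at h
    simp [Fm.eval, h]
  | tru => intro _; rfl
  | fls => intro _; rfl
  | neg F ih =>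
    intro h
    simp only [Fm.occurs] at h
    simp [Fm.eval, ih h]
  | conj F G ihF ihG =>
    intro h
    simp only [Fm.occurs] at h
    push_neg at h
    simp [Fm.eval, ihF h.1, ihG h.2]
  | disj F G ihF ihG =>
    intro h
    simp only [Fm.occurs] at h
    push_neg at h
    simp [Fm.eval, ihF h.1, ihG h.2]

/-- `E` is satisfiable iff the default theory
`⟨{(: a∧E / a∧E)}, ∅⟩` skeptically entails `a`, where `a` does not occur in `E`. -/
theorem sat_iff_skeptical_default (E : Fm) (a : Nat) (ha : ¬ E.occurs a) :
    (∃ σ, E.eval σ = true) ↔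
      Skeptical {⟨.tru, .conj (.var a) E, .conj (.var a) E⟩} ∅ (.var a) := by
  constructor
  · rintro ⟨σ, hσ⟩ E' hE'
    by_cases hn : (Fm.neg (Fm.conj (.var a) E)) ∈ E'
    · exfalso
      have hTh : DLClosed {⟨.tru, .conj (.var a) E, .conj (.var a) E⟩} ∅ E' (Th ∅) := by
        refine ⟨by simp, fun f hf => ?_, ?_⟩
        · intro τ hτ
          exact hf τ (fun g hg => hg τ hτ)
        · intro d' hd' _ hj
          simp only [Set.mem_singleton_iff] at hd'
          subst hd'
          exact absurd hn hj
      have hsub : E' ⊆ Th ∅ := by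
        rw [hE']
        exact Set.sInter_subset_of_mem hTh
      have hent : Entails ∅ (Fm.neg (Fm.conj (.var a) E)) := hsub hn
      have h2 := hent (fun n => if n = a then true else σ n)
        (fun g hg => absurd hg (Set.notMem_empty g))
      simp only [Fm.eval] at h2
      rw [eval_indep a true σ E ha] at h2
      simp [hσ] at h2
    · rw [hE']
      rw [Set.mem_sInter]
      rintro G ⟨_, hded, happ⟩
      have htru : Fm.tru ∈ G := hded _ (fun τ _ => rfl)
      have hcon : Fm.conj (.var a) E ∈ G :=
        happ _ (Set.mem_singleton _) htru hn
      apply hded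
      intro τ hτ
      have h3 := hτ _ hcon
      simp only [Fm.eval, Bool.and_eq_true] at h3
      exact h3.1
  · intro hsk
    by_contra hns
    push_neg at hns
    have hunsat : ∀ σ, E.eval σ = false := by
      intro σ
      cases h : E.eval σ with
      | false => rfl
      | true => exact absurd h (hns σ)
    have hext : IsExtension {⟨.tru, .conj (.var a) E, .conj (.var a) E⟩} ∅ (Th ∅) := by
      unfold IsExtension
      apply Set.Subset.antisymm
      · intro f hf
        rw [Set.mem_sInter]
        rintro G ⟨_, hded, _⟩
        exact hded f (fun τ hτ => hf τ (fun g hg => absurd hg (Set.notMem_empty g)))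
      · apply Set.sInter_subset_of_mem
        refine ⟨by simp, fun f hf τ hτ => hf τ (fun g hg => hg τ hτ), ?_⟩
        intro d' hd' _ hj
        exfalso
        apply hj
        simp only [Set.mem_singleton_iff] at hd'
        subst hd'
        intro τ _
        simp [Fm.eval, hunsat τ]
    have hmem := hsk _ hext
    have h2 := hmem (fun _ => false) (fun g hg => absurd hg (Set.notMem_empty g))
    simp [Fm.eval] at h2
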